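/- Long-range commuting LRB with α > 0: let Ψ be a commuting interaction on a finite graph Λ with ‖Ψ‖_{F_α} < ∞ where F_α(r) = (1+r)^{-α}, α > 0. Then for disjoint X, Y ⊆ Λ, A ∈ A_X, B ∈ A_Y: ‖[τ_t^Λ(A), B]‖ ≤ 4‖Ψ‖_{F_α}·‖A‖·‖B‖·|X|·|Y|·|t|·(1+dist(X,Y))^{-α}. -/

import Mathlib

/-!
Split `H = K + H'`, where `K` collects the terms `Ψ(Z)` with `Z` meeting both `X` and `Y`. All
terms commute, so `τ_t = τ_t^K ∘ τ_t^{H'}`. In `τ_t^{H'}(A)` the terms missing `X` drop out and the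
remaining ones miss `Y`, so `A' = τ_t^{H'}(A)` still commutes with `B`, and
`‖[τ_t^K(A'), B]‖ ≤ 2 ‖τ_t^K(A') - A'‖ ‖B‖ ≤ 4 |t| ‖K‖ ‖A‖ ‖B‖` because `‖e^{itK} - 1‖ ≤ |t| ‖K‖`
for self-adjoint `K`. Finally `‖K‖ ≤ ∑_{x ∈ X, y ∈ Y} ∑_{Z ∋ x, y} ‖Ψ(Z)‖`, and each inner sum is
at most `N (1 + dist(X, Y))^{-α}`.
-/

noncomputable section

/-- The algebra of bounded operators on the Hilbert space `⊗_{x ∈ Λ} ℂ^q`, realized as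
`EuclideanSpace ℂ (Λ → Fin q)` (tensor basis indexed by spin configurations). -/
abbrev LatticeOp (Λ : Type*) [Fintype Λ] [DecidableEq Λ] (q : ℕ) :=
  EuclideanSpace ℂ (Λ → Fin q) →L[ℂ] EuclideanSpace ℂ (Λ → Fin q)

variable {Λ : Type*} [Fintype Λ] [DecidableEq Λ] {q : ℕ}

/-- Matrix entry of an operator in the tensor-product (configuration) basis. -/
def entry (A : LatticeOp Λ q) (f g : Λ → Fin q) : ℂ :=
  @inner ℂ _ _ (EuclideanSpace.single f (1 : ℂ)) (A (EuclideanSpace.single g (1 : ℂ)))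

/-- `A ∈ 𝒜_X`: the operator `A` acts as `A' ⊗ 1` for an operator `A'` on `⊗_{x ∈ X} ℂ^q`,
i.e. its matrix elements are diagonal outside `X` and depend only on the restriction to `X`. -/
def IsSupportedOn (X : Finset Λ) (A : LatticeOp Λ q) : Prop :=
  ∃ M : (Λ → Fin q) → (Λ → Fin q) → ℂ,
    (∀ f g f' g' : Λ → Fin q, (∀ i ∈ X, f i = f' i) → (∀ i ∈ X, g i = g' i) → M f g = M f' g') ∧
    ∀ f g : Λ → Fin q, entry A f g = if ∀ i ∉ X, f i = g i then M f g else 0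

/-- Heisenberg evolution `τ_t(A) = e^{itH} A e^{-itH}`. -/
def heis (H : LatticeOp Λ q) (t : ℝ) (A : LatticeOp Λ q) : LatticeOp Λ q :=
  NormedSpace.exp ((Complex.I * (t : ℂ)) • H) * A *
    NormedSpace.exp (-(Complex.I * (t : ℂ)) • H)

/-- The Hamiltonian `H_Λ = Σ_{Z ⊆ Λ} Ψ(Z)`. -/
def hamiltonian (Ψ : Finset Λ → LatticeOp Λ q) : LatticeOp Λ q :=
  ∑ Z : Finset Λ, Ψ Z

/-- An interaction: each `Ψ(Z)` is self-adjoint and supported in `Z`. -/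
def IsInteraction (Ψ : Finset Λ → LatticeOp Λ q) : Prop :=
  ∀ Z : Finset Λ, IsSelfAdjoint (Ψ Z) ∧ IsSupportedOn Z (Ψ Z)

/-- A commuting interaction: all terms pairwise commute. -/
def IsCommutingInteraction (Ψ : Finset Λ → LatticeOp Λ q) : Prop :=
  IsInteraction Ψ ∧ ∀ Z Z' : Finset Λ, Commute (Ψ Z) (Ψ Z')

open Complex Finset

section CStarAlgebra

variable {𝒜 : Type*} [CStarAlgebra 𝒜]

theorem selfAdjoint.norm_expUnitary_sub_one_le (x : selfAdjoint 𝒜) :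
    ‖(selfAdjoint.expUnitary x - 1 : 𝒜)‖ ≤ ‖x‖ := by
  nontriviality 𝒜
  rcases le_or_gt ‖x‖ Real.pi with hx | hx
  · refine (pow_le_pow_iff_left₀ (norm_nonneg _) (norm_nonneg _) two_ne_zero).1 ?_
    rw [selfAdjoint.norm_sq_expUnitary_sub_one hx]
    linarith [Real.one_sub_sq_div_two_le_cos (x := ‖x‖)]
  · calc ‖(selfAdjoint.expUnitary x - 1 : 𝒜)‖
        ≤ ‖(selfAdjoint.expUnitary x : 𝒜)‖ + ‖(1 : 𝒜)‖ := norm_sub_le _ _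
      _ = 2 := by rw [CStarRing.norm_coe_unitary, CStarRing.norm_one, one_add_one_eq_two]
      _ ≤ ‖x‖ := by linarith [Real.pi_gt_three]

variable {H : 𝒜}

theorem IsSelfAdjoint.exp_I_mul_smul_eq_expUnitary (hH : IsSelfAdjoint H) (s : ℝ) :
    NormedSpace.exp ((I * s) • H) = selfAdjoint.expUnitary (s • ⟨H, hH⟩) := by
  rw [selfAdjoint.expUnitary_coe, selfAdjoint.val_smul, ← Complex.coe_smul, smul_smul]

theorem IsSelfAdjoint.exp_I_mul_smul_mem_unitary (hH : IsSelfAdjoint H) (s : ℝ) :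
    NormedSpace.exp ((I * s) • H) ∈ unitary 𝒜 := by
  rw [hH.exp_I_mul_smul_eq_expUnitary]
  exact SetLike.coe_mem _

theorem IsSelfAdjoint.norm_exp_I_mul_smul_sub_one_le (hH : IsSelfAdjoint H) (s : ℝ) :
    ‖NormedSpace.exp ((I * s) • H) - 1‖ ≤ |s| * ‖H‖ := by
  rw [hH.exp_I_mul_smul_eq_expUnitary, ← Real.norm_eq_abs, ← norm_smul]
  exact selfAdjoint.norm_expUnitary_sub_one_le _

theorem IsSelfAdjoint.star_exp_I_mul_smul (hH : IsSelfAdjoint H) (s : ℝ) :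
    star (NormedSpace.exp ((I * s) • H)) = NormedSpace.exp (-(I * s) • H) := by
  rw [NormedSpace.star_exp, star_smul, hH.star_eq, star_mul', Complex.star_def, conj_I, conj_ofReal,
    neg_mul]

theorem norm_unitary_conj_sub_self_le {U : 𝒜} (hU : U ∈ unitary 𝒜) (a : 𝒜) :
    ‖U * a * star U - a‖ ≤ 2 * ‖U - 1‖ * ‖a‖ := by
  have hdecomp : U * a * star U - a = (U - 1) * a * star U + a * star (U - 1) := by
    rw [star_sub, star_one, sub_mul, sub_mul, one_mul, mul_sub, mul_one]
    abel
  calc ‖U * a * star U - a‖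
      ≤ ‖(U - 1) * a * star U‖ + ‖a * star (U - 1)‖ := by
        rw [hdecomp]
        exact norm_add_le _ _
    _ ≤ ‖U - 1‖ * ‖a‖ + ‖a‖ * ‖star (U - 1)‖ := by
        rw [CStarRing.norm_mul_mem_unitary _ (Unitary.star_mem hU)]
        exact add_le_add (norm_mul_le (U - 1) a) (norm_mul_le a (star (U - 1)))
    _ = 2 * ‖U - 1‖ * ‖a‖ := by
        rw [norm_star]
        ring

end CStarAlgebra

theorem norm_mul_sub_mul_le_of_commute {R : Type*} [NormedRing R] {a b c : R} (h : Commute b c) :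
    ‖a * c - c * a‖ ≤ 2 * ‖a - b‖ * ‖c‖ := by
  have : a * c - c * a = (a - b) * c - c * (a - b) := by
    rw [sub_mul, mul_sub, h.eq]
    abel
  rw [this]
  linarith [norm_sub_le ((a - b) * c) (c * (a - b)), norm_mul_le (a - b) c, norm_mul_le c (a - b)]

section Heisenberg

variable {H K L A B : LatticeOp Λ q} {t : ℝ}

theorem heis_eq_unitary_conj (hH : IsSelfAdjoint H) (t : ℝ) (A : LatticeOp Λ q) :
    heis H t A = NormedSpace.exp ((I * t) • H) * A * star (NormedSpace.exp ((I * t) • H)) := by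
  rw [hH.star_exp_I_mul_smul]
  rfl

theorem norm_heis (hH : IsSelfAdjoint H) : ‖heis H t A‖ = ‖A‖ := by
  have hU := hH.exp_I_mul_smul_mem_unitary t
  rw [heis_eq_unitary_conj hH, CStarRing.norm_mul_mem_unitary _ (Unitary.star_mem hU),
    CStarRing.norm_mem_unitary_mul _ hU]

theorem norm_heis_sub_self_le (hH : IsSelfAdjoint H) : ‖heis H t A - A‖ ≤ 2 * |t| * ‖H‖ * ‖A‖ := by
  rw [heis_eq_unitary_conj hH]
  refine (norm_unitary_conj_sub_self_le (hH.exp_I_mul_smul_mem_unitary t) A).trans ?_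
  have := mul_le_mul_of_nonneg_right (hH.norm_exp_I_mul_smul_sub_one_le t) (norm_nonneg A)
  linarith

theorem heis_add (hKL : Commute K L) : heis (K + L) t A = heis K t (heis L t A) := by
  let +nondep : NormedAlgebra ℚ (LatticeOp Λ q) := .restrictScalars ℚ ℂ _
  simp only [heis, smul_add]
  rw [NormedSpace.exp_add_of_commute ((hKL.smul_left _).smul_right _), add_comm,
    NormedSpace.exp_add_of_commute ((hKL.symm.smul_left _).smul_right _)]
  simp only [mul_assoc]

theorem heis_eq_self_of_commute (h : Commute H A) : heis H t A = A := by
  let +nondep : NormedAlgebra ℚ (LatticeOp Λ q) := .restrictScalars ℚ ℂ _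
  rw [heis, neg_smul (R := ℂ) (M := LatticeOp Λ q), (h.smul_left _).exp_left.eq, mul_assoc,
    ← NormedSpace.exp_add_of_commute (Commute.refl ((I * t : ℂ) • H)).neg_right, add_neg_cancel,
    NormedSpace.exp_zero, mul_one]

theorem Commute.heis_left (hHB : Commute H B) (hAB : Commute A B) : Commute (heis H t A) B :=
  ((hHB.smul_left _).exp_left.mul_left hAB).mul_left (hHB.smul_left _).exp_left

theorem norm_heis_mul_sub_mul_heis_le (hK : IsSelfAdjoint K) (hAB : Commute A B) :
    ‖heis K t A * B - B * heis K t A‖ ≤ 4 * |t| * ‖K‖ * ‖A‖ * ‖B‖ := by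
  have := norm_heis_sub_self_le hK (t := t) (A := A)
  refine (norm_mul_sub_mul_le_of_commute hAB).trans ?_
  nlinarith [norm_nonneg B]

end Heisenberg

section Locality

theorem LatticeOp.ext_entry {A B : LatticeOp Λ q} (h : ∀ f g, entry A f g = entry B f g) :
    A = B := by
  refine ContinuousLinearMap.coe_injective <| (EuclideanSpace.basisFun _ ℂ).toBasis.ext fun g => ?_
  ext f
  simpa [entry, EuclideanSpace.inner_single_left] using h f g

theorem entry_mul (A B : LatticeOp Λ q) (f g : Λ → Fin q) :
    entry (A * B) f g = ∑ h, entry A f h * entry B h g := by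
  simpa [entry, ContinuousLinearMap.adjoint_inner_left] using
    ((EuclideanSpace.basisFun _ ℂ).sum_inner_mul_inner
      (ContinuousLinearMap.adjoint A (EuclideanSpace.single f 1))
      (B (EuclideanSpace.single g 1))).symm

theorem entry_mul_of_disjoint {X Y : Finset Λ} (hXY : Disjoint X Y) {A B : LatticeOp Λ q}
    {MA MB : (Λ → Fin q) → (Λ → Fin q) → ℂ}
    (hA : ∀ f g, entry A f g = if ∀ i ∉ X, f i = g i then MA f g else 0)
    (hB : ∀ f g, entry B f g = if ∀ i ∉ Y, f i = g i then MB f g else 0) (f g : Λ → Fin q) :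
    entry (A * B) f g = if ∀ i ∉ X, i ∉ Y → f i = g i then
        MA f (X.piecewise g f) * MB (X.piecewise g f) g else 0 := by
  set h₀ := X.piecewise g f
  have hleft : ∀ i ∉ X, f i = h₀ i := fun i hi => by simp [h₀, hi]
  have hright : (∀ i ∉ Y, h₀ i = g i) ↔ ∀ i ∉ X, i ∉ Y → f i = g i := by
    refine ⟨fun h i hX hY => (hleft i hX).trans (h i hY), fun h i hY => ?_⟩
    by_cases hX : i ∈ X
    · simp [h₀, hX]
    · simpa [h₀, hX] using h i hX hY
  have hzero : ∀ h ≠ h₀, entry A f h * entry B h g = 0 := by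
    intro h hne
    rw [hA, hB]
    split_ifs with h1 h2
    · refine absurd (funext fun i => ?_) hne
      by_cases hX : i ∈ X
      · simpa [h₀, hX] using h2 i (disjoint_left.1 hXY hX)
      · simpa [h₀, hX] using (h1 i hX).symm
    all_goals simp
  rw [entry_mul, sum_eq_single h₀ (fun h _ => hzero h) (by simp), hA, hB, if_pos hleft]
  simp only [hright, mul_ite, mul_zero]

theorem IsSupportedOn.commute {X Y : Finset Λ} (hXY : Disjoint X Y) {A B : LatticeOp Λ q}
    (hA : IsSupportedOn X A) (hB : IsSupportedOn Y B) : Commute A B := by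
  obtain ⟨MA, hMA, hEA⟩ := hA
  obtain ⟨MB, hMB, hEB⟩ := hB
  refine LatticeOp.ext_entry fun f g => ?_
  rw [entry_mul_of_disjoint hXY hEA hEB, entry_mul_of_disjoint hXY.symm hEB hEA]
  have hiff : (∀ i ∉ X, i ∉ Y → f i = g i) ↔ (∀ i ∉ Y, i ∉ X → f i = g i) :=
    ⟨fun h i hY hX => h i hX hY, fun h i hX hY => h i hY hX⟩
  have hA' : MA f (X.piecewise g f) = MA (Y.piecewise g f) g :=
    hMA _ _ _ _ (fun i hi => by simp [disjoint_left.1 hXY hi]) (fun i hi => by simp [hi])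
  have hB' : MB (X.piecewise g f) g = MB f (Y.piecewise g f) :=
    hMB _ _ _ _ (fun i hi => by simp [disjoint_right.1 hXY hi]) (fun i hi => by simp [hi])
  rw [hA', hB', mul_comm]
  simp only [hiff]

end Locality

section Interaction

variable {Ψ : Finset Λ → LatticeOp Λ q}

theorem IsInteraction.isSelfAdjoint_sum (hΨ : IsInteraction Ψ) (S : Finset (Finset Λ)) :
    IsSelfAdjoint (∑ Z ∈ S, Ψ Z) :=
  _root_.isSelfAdjoint_sum (x := Ψ) S fun Z _ => (hΨ Z).1

theorem IsInteraction.commute_sum_of_disjoint (hΨ : IsInteraction Ψ) {S : Finset (Finset Λ)}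
    {X : Finset Λ} {A : LatticeOp Λ q} (hS : ∀ Z ∈ S, Disjoint Z X) (hA : IsSupportedOn X A) :
    Commute (∑ Z ∈ S, Ψ Z) A :=
  Commute.sum_left _ _ _ fun Z hZ => (hΨ Z).2.commute (hS Z hZ) hA

theorem IsCommutingInteraction.commute_sum (hΨ : IsCommutingInteraction Ψ)
    (S T : Finset (Finset Λ)) : Commute (∑ Z ∈ S, Ψ Z) (∑ Z ∈ T, Ψ Z) :=
  Commute.sum_left _ _ _ fun Z _ => Commute.sum_right _ _ _ fun Z' _ => hΨ.2 Z Z'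

theorem IsCommutingInteraction.heis_hamiltonian_eq (hΨ : IsCommutingInteraction Ψ)
    {X : Finset Λ} {A : LatticeOp Λ q} (hA : IsSupportedOn X A) (Y : Finset Λ) (t : ℝ) :
    heis (hamiltonian Ψ) t A =
      heis (∑ Z with ¬Disjoint Z X ∧ ¬Disjoint Z Y, Ψ Z) t
        (heis (∑ Z with ¬Disjoint Z X ∧ Disjoint Z Y, Ψ Z) t A) := by
  have hsplit : hamiltonian Ψ = ∑ Z with ¬Disjoint Z X ∧ ¬Disjoint Z Y, Ψ Z +
      (∑ Z with ¬Disjoint Z X ∧ Disjoint Z Y, Ψ Z + ∑ Z with Disjoint Z X, Ψ Z) := by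
    rw [hamiltonian, ← sum_filter_add_sum_filter_not univ (fun Z => ¬Disjoint Z X),
      ← sum_filter_add_sum_filter_not (univ.filter _) (fun Z => ¬Disjoint Z Y), filter_filter,
      filter_filter]
    simp only [not_not, add_assoc]
  rw [hsplit, heis_add ((hΨ.commute_sum _ _).add_right (hΨ.commute_sum _ _)),
    heis_add (hΨ.commute_sum _ _), heis_eq_self_of_commute (hΨ.1.commute_sum_of_disjoint (by simp) hA)]

end Interaction

theorem norm_sum_meeting_le {E : Type*} [SeminormedAddCommGroup E] (Ψ : Finset Λ → E)
    (X Y : Finset Λ) :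
    ‖∑ Z with ¬Disjoint Z X ∧ ¬Disjoint Z Y, Ψ Z‖ ≤
      ∑ p ∈ X ×ˢ Y, ∑ Z with p.1 ∈ Z ∧ p.2 ∈ Z, ‖Ψ Z‖ := by
  calc ‖∑ Z with ¬Disjoint Z X ∧ ¬Disjoint Z Y, Ψ Z‖
      ≤ ∑ Z with ¬Disjoint Z X ∧ ¬Disjoint Z Y, ‖Ψ Z‖ := norm_sum_le _ _
    _ ≤ ∑ Z, ∑ p ∈ X ×ˢ Y with p.1 ∈ Z ∧ p.2 ∈ Z, ‖Ψ Z‖ := by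
        rw [sum_filter]
        refine sum_le_sum fun Z _ => ?_
        split_ifs with hZ
        · obtain ⟨x, hxZ, hxX⟩ := not_disjoint_iff.1 hZ.1
          obtain ⟨y, hyZ, hyY⟩ := not_disjoint_iff.1 hZ.2
          have hxy : (x, y) ∈ (X ×ˢ Y).filter fun p => p.1 ∈ Z ∧ p.2 ∈ Z :=
            mem_filter.2 ⟨mem_product.2 ⟨hxX, hyY⟩, hxZ, hyZ⟩
          exact single_le_sum (f := fun _ => ‖Ψ Z‖) (fun _ _ => norm_nonneg _) hxy
        · exact sum_nonneg fun _ _ => norm_nonneg _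
    _ = ∑ p ∈ X ×ˢ Y, ∑ Z with p.1 ∈ Z ∧ p.2 ∈ Z, ‖Ψ Z‖ := by
        simp only [sum_filter]
        exact sum_comm

theorem sum_product_le_of_le_decay {P : Type*} [PseudoMetricSpace P] {F : P → P → ℝ} {N α : ℝ}
    (hα : 0 ≤ α) (hN : 0 ≤ N) (hF : ∀ x y, F x y ≤ N * (1 + dist x y) ^ (-α))
    {X Y : Finset P} (hXY : (X ×ˢ Y).Nonempty) :
    ∑ p ∈ X ×ˢ Y, F p.1 p.2 ≤
      X.card * Y.card * (N * (1 + (X ×ˢ Y).inf' hXY fun p => dist p.1 p.2) ^ (-α)) := by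
  set D := (X ×ˢ Y).inf' hXY fun p => dist p.1 p.2
  have hD : 0 ≤ D := le_inf' _ _ fun p _ => dist_nonneg
  calc ∑ p ∈ X ×ˢ Y, F p.1 p.2 ≤ ∑ _p ∈ X ×ˢ Y, N * (1 + D) ^ (-α) := by
        refine sum_le_sum fun p hp => (hF p.1 p.2).trans ?_
        have hpD : D ≤ dist p.1 p.2 := inf'_le _ hp
        exact mul_le_mul_of_nonneg_left
          (Real.rpow_le_rpow_of_nonpos (by positivity) (by linarith) (by linarith)) hN
    _ = X.card * Y.card * (N * (1 + D) ^ (-α)) := by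
        rw [sum_const, card_product, nsmul_eq_mul]
        push_cast
        ring

/-- Long-range commuting Lieb-Robinson bound (`α > 0`): if `‖Ψ‖_{F_α} ≤ N` with
`F_α(r) = (1+r)^{-α}`, then for disjoint `X, Y` and `A ∈ 𝒜_X`, `B ∈ 𝒜_Y`,
`‖[τ_t^Λ(A), B]‖ ≤ 4 N ‖A‖ ‖B‖ |X| |Y| |t| (1 + dist(X,Y))^{-α}`. -/
theorem long_range_commuting_lrb [MetricSpace Λ]
    (Ψ : Finset Λ → LatticeOp Λ q) (hΨ : IsCommutingInteraction Ψ)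
    (α : ℝ) (hα : 0 < α) (N : ℝ)
    (hN : ∀ x y : Λ,
      ∑ Z ∈ Finset.univ.filter (fun Z : Finset Λ => x ∈ Z ∧ y ∈ Z), ‖Ψ Z‖ ≤
        N * (1 + dist x y) ^ (-α))
    (X Y : Finset Λ) (hX : X.Nonempty) (hY : Y.Nonempty) (hXY : Disjoint X Y)
    (A B : LatticeOp Λ q) (hA : IsSupportedOn X A) (hB : IsSupportedOn Y B) (t : ℝ) :
    ‖heis (hamiltonian Ψ) t A * B - B * heis (hamiltonian Ψ) t A‖ ≤
      4 * N * ‖A‖ * ‖B‖ * (X.card : ℝ) * (Y.card : ℝ) * |t| *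
        (1 + (X ×ˢ Y).inf' (hX.product hY) (fun p => dist p.1 p.2)) ^ (-α) := by
  set K := ∑ Z with ¬Disjoint Z X ∧ ¬Disjoint Z Y, Ψ Z
  set A' := heis (∑ Z with ¬Disjoint Z X ∧ Disjoint Z Y, Ψ Z) t A
  set D := (X ×ˢ Y).inf' (hX.product hY) fun p => dist p.1 p.2
  have hN0 : 0 ≤ N := by
    obtain ⟨x, -⟩ := hX
    simpa using (sum_nonneg fun Z _ => norm_nonneg (Ψ Z)).trans (hN x x)
  have hK : ‖K‖ ≤ X.card * Y.card * (N * (1 + D) ^ (-α)) :=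
    (norm_sum_meeting_le Ψ X Y).trans (sum_product_le_of_le_decay hα.le hN0 hN _)
  have hA'B : Commute A' B :=
    (hΨ.1.commute_sum_of_disjoint (fun Z hZ => (mem_filter.1 hZ).2.2) hB).heis_left
      (hA.commute hXY hB)
  rw [hΨ.heis_hamiltonian_eq hA Y]
  calc _ ≤ 4 * |t| * ‖K‖ * ‖A'‖ * ‖B‖ :=
        norm_heis_mul_sub_mul_heis_le (hΨ.1.isSelfAdjoint_sum _) hA'B
    _ = 4 * |t| * ‖K‖ * ‖A‖ * ‖B‖ := by rw [norm_heis (hΨ.1.isSelfAdjoint_sum _)]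
    _ ≤ 4 * |t| * (X.card * Y.card * (N * (1 + D) ^ (-α))) * ‖A‖ * ‖B‖ := by gcongr
    _ = _ := by ring
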